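/- arXiv:2103.15058 — 5 statements merged into one kernel-verified Lean document; each statement's English description precedes it below -/
import Mathlib

section
/- The vector fields on ℝ³ (with coordinates x,y,z) given by v = (x² + y⁴) ∂/∂x + xy ∂/∂y + (2y²z - xz) ∂/∂z, u = 2x ∂/∂x + y ∂/∂y - z ∂/∂z, w = -∂/∂x satisfy the sl(2) commutation relations [u,v] = 2v, [u,w] = -2w, [v,w] = u. -/
noncomputable section

/-- Points/vectors in ℝ³. -/
abbrev V3 := ℝ × ℝ × ℝ

/-- Partial derivative in the first coordinate. -/
def pd1 (f : V3 → ℝ) (p : V3) : ℝ := deriv (fun t => f (t, p.2.1, p.2.2)) p.1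
/-- Partial derivative in the second coordinate. -/
def pd2 (f : V3 → ℝ) (p : V3) : ℝ := deriv (fun t => f (p.1, t, p.2.2)) p.2.1
/-- Partial derivative in the third coordinate. -/
def pd3 (f : V3 → ℝ) (p : V3) : ℝ := deriv (fun t => f (p.1, p.2.1, t)) p.2.2

/-- Gradient of a scalar function on ℝ³. -/
def grad (f : V3 → ℝ) (p : V3) : V3 := (pd1 f p, pd2 f p, pd3 f p)

/-- Euclidean dot product on ℝ³. -/
def dot (a b : V3) : ℝ := a.1 * b.1 + a.2.1 * b.2.1 + a.2.2 * b.2.2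

/-- Cross product on ℝ³. -/
def cross (a b : V3) : V3 :=
  (a.2.1 * b.2.2 - a.2.2 * b.2.1,
   a.2.2 * b.1 - a.1 * b.2.2,
   a.1 * b.2.1 - a.2.1 * b.1)

/-- Curl of a vector field on ℝ³. -/
def curl (F : V3 → V3) (p : V3) : V3 :=
  (pd2 (fun q => (F q).2.2) p - pd3 (fun q => (F q).2.1) p,
   pd3 (fun q => (F q).1) p - pd1 (fun q => (F q).2.2) p,
   pd1 (fun q => (F q).2.1) p - pd2 (fun q => (F q).1) p)

/-- Divergence of a vector field on ℝ³. -/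
def diverg (F : V3 → V3) (p : V3) : ℝ :=
  pd1 (fun q => (F q).1) p + pd2 (fun q => (F q).2.1) p + pd3 (fun q => (F q).2.2) p

/-- Jacobi–Lie bracket of vector fields on ℝ³ (componentwise `(X·∇)Y - (Y·∇)X`). -/
def lie (X Y : V3 → V3) (p : V3) : V3 :=
  (dot (X p) (grad (fun q => (Y q).1) p) - dot (Y p) (grad (fun q => (X q).1) p),
   dot (X p) (grad (fun q => (Y q).2.1) p) - dot (Y p) (grad (fun q => (X q).2.1) p),
   dot (X p) (grad (fun q => (Y q).2.2) p) - dot (Y p) (grad (fun q => (X q).2.2) p))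

/-- The Guillot vector field. -/
def vG (p : V3) : V3 :=
  (p.1 ^ 2 + p.2.1 ^ 4, p.1 * p.2.1, 2 * p.2.1 ^ 2 * p.2.2 - p.1 * p.2.2)

/-- sl(2) relations for the Guillot vector fields. -/
theorem stmt9 :
    (∀ p : V3, lie (fun q : V3 => (2 * q.1, q.2.1, -q.2.2)) vG p = (2 : ℝ) • vG p) ∧
    (∀ p : V3, lie (fun q : V3 => (2 * q.1, q.2.1, -q.2.2))
        (fun _ : V3 => ((-1 : ℝ), (0 : ℝ), (0 : ℝ))) p
        = (-2 : ℝ) • (((-1 : ℝ), (0 : ℝ), (0 : ℝ)) : V3)) ∧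
    (∀ p : V3, lie vG (fun _ : V3 => ((-1 : ℝ), (0 : ℝ), (0 : ℝ))) p
        = (2 * p.1, p.2.1, -p.2.2)) := by
  refine ⟨fun p => ?_, fun p => ?_, fun p => ?_⟩
  · simp only [lie, dot, grad, pd1, pd2, pd3, vG, Prod.smul_def, smul_eq_mul]
    norm_num [deriv_add, deriv_pow, deriv_mul, deriv_sub, mul_comm]
    refine ⟨by ring, by ring, by ring⟩
  · simp only [lie, dot, grad, pd1, pd2, pd3, vG, Prod.smul_def, smul_eq_mul]
    norm_num [deriv_add, deriv_pow, deriv_mul, deriv_sub, mul_comm]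
  · simp only [lie, dot, grad, pd1, pd2, pd3, vG, Prod.smul_def, smul_eq_mul]
    norm_num [deriv_add, deriv_pow, deriv_mul, deriv_sub, mul_comm]
end
end

section
/- The function H₁(x,y,z) = x²/y² - y² is a first integral of the Guillot system ẋ = x² + y⁴, ẏ = xy, ż = 2y²z - xz on the region y ≠ 0, i.e., (x² + y⁴) ∂H₁/∂x + xy ∂H₁/∂y + (2y²z - xz) ∂H₁/∂z = 0. -/
noncomputable section

/-- H₁ = x²/y² - y² is a first integral of the Guillot system for y ≠ 0. -/
theorem stmt10 :
    ∀ p : V3, p.2.1 ≠ 0 →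
      dot (vG p) (grad (fun q : V3 => q.1 ^ 2 / q.2.1 ^ 2 - q.2.1 ^ 2) p) = 0 := by
  rintro ⟨x, y, z⟩ hy
  have hy' : y ≠ 0 := hy
  have h1 : pd1 (fun q : V3 => q.1 ^ 2 / q.2.1 ^ 2 - q.2.1 ^ 2) (x, y, z) = 2 * x / y ^ 2 := by
    unfold pd1
    have h : HasDerivAt (fun t : ℝ => t ^ 2 / y ^ 2 - y ^ 2)
        (2 * x ^ 1 / y ^ 2 - 0) x :=
      ((hasDerivAt_pow 2 x).div_const (y ^ 2)).sub (hasDerivAt_const x (y ^ 2))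
    simpa using h.deriv
  have h2 : pd2 (fun q : V3 => q.1 ^ 2 / q.2.1 ^ 2 - q.2.1 ^ 2) (x, y, z)
      = (0 * y ^ 2 - x ^ 2 * (2 * y ^ 1)) / (y ^ 2) ^ 2 - 2 * y ^ 1 := by
    unfold pd2
    have h : HasDerivAt (fun t : ℝ => x ^ 2 / t ^ 2 - t ^ 2)
        ((0 * y ^ 2 - x ^ 2 * (2 * y ^ 1)) / (y ^ 2) ^ 2 - 2 * y ^ 1) y :=
      (((hasDerivAt_const y (x ^ 2)).div (hasDerivAt_pow 2 y)
        (pow_ne_zero 2 hy')).sub (hasDerivAt_pow 2 y))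
    exact h.deriv
  have h3 : pd3 (fun q : V3 => q.1 ^ 2 / q.2.1 ^ 2 - q.2.1 ^ 2) (x, y, z) = 0 := by
    unfold pd3
    simp
  simp only [dot, grad, vG, h1, h2, h3]
  field_simp
  ring
end
end

section
/- On the region of ℝ³ where y > 0, z > 0, and x + y² > 0, the function H₂(x,y,z) = log((x + y²)/(y (yz)^{1/2})) is a first integral of the Guillot system ẋ = x² + y⁴, ẏ = xy, ż = 2y²z - xz. -/
noncomputable section

/-! On the region, `H₂ = log (x + y²) - (3/2) log y - (1/2) log z`. The three factors are Darboux
polynomials of the Guillot field `X`: `X (x + y²) = (x + y²)²`, `X y = x y`, `X z = (2y² - x) z`,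
so `X H₂ = (x + y²) - (3/2) x - (1/2) (2y² - x) = 0`. -/

open Real Filter Topology

theorem grad_congr_of_eventuallyEq {f g : V3 → ℝ} {p : V3} (h : f =ᶠ[𝓝 p] g) :
    grad f p = grad g p := by
  have along (γ : ℝ → V3) (t : ℝ) (hγ : Continuous γ) (ht : γ t = p) :
      deriv (fun s => f (γ s)) t = deriv (fun s => g (γ s)) t := by
    have hγt := hγ.tendsto t
    rw [ht] at hγt
    exact Filter.EventuallyEq.deriv_eq (hγt.eventually h)
  simp only [grad, pd1, pd2, pd3]
  exact Prod.ext (along (fun t => (t, p.2.1, p.2.2)) p.1 (by fun_prop) rfl)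
    (Prod.ext (along (fun t => (p.1, t, p.2.2)) p.2.1 (by fun_prop) rfl)
      (along (fun t => (p.1, p.2.1, t)) p.2.2 (by fun_prop) rfl))

theorem log_div_mul_sqrt_mul {a y z : ℝ} (ha : 0 < a) (hy : 0 < y) (hz : 0 < z) :
    log (a / (y * √(y * z))) = log a - 3 / 2 * log y - 1 / 2 * log z := by
  rw [log_div ha.ne' (by positivity), sqrt_mul hy.le, log_mul hy.ne' (by positivity),
    log_mul (by positivity) (by positivity), log_sqrt hy.le, log_sqrt hz.le]
  ring

def guillotLogForm (q : V3) : ℝ := log (q.1 + q.2.1 ^ 2) - 3 / 2 * log q.2.1 - 1 / 2 * log q.2.2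

theorem eventuallyEq_guillotLogForm {p : V3} (hy : 0 < p.2.1) (hz : 0 < p.2.2)
    (hxy : 0 < p.1 + p.2.1 ^ 2) :
    (fun q : V3 => log ((q.1 + q.2.1 ^ 2) / (q.2.1 * √(q.2.1 * q.2.2)))) =ᶠ[𝓝 p]
      guillotLogForm := by
  have hopen : IsOpen {q : V3 | 0 < q.2.1 ∧ 0 < q.2.2 ∧ 0 < q.1 + q.2.1 ^ 2} := by
    refine (isOpen_lt continuous_const ?_).and
      ((isOpen_lt continuous_const ?_).and (isOpen_lt continuous_const ?_)) <;> fun_prop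
  filter_upwards [hopen.mem_nhds ⟨hy, hz, hxy⟩] with q ⟨hqy, hqz, hqxy⟩
  exact log_div_mul_sqrt_mul hqxy hqy hqz

theorem grad_guillotLogForm {x y z : ℝ} (hy : 0 < y) (hz : 0 < z) (hxy : 0 < x + y ^ 2) :
    grad guillotLogForm (x, y, z) =
      (1 / (x + y ^ 2), 2 * y / (x + y ^ 2) - 3 / (2 * y), -1 / (2 * z)) := by
  have d1 : HasDerivAt (fun t => log (t + y ^ 2) - 3 / 2 * log y - 1 / 2 * log z)
      (1 / (x + y ^ 2)) x := by
    simpa using ((((hasDerivAt_id x).add_const (y ^ 2)).log hxy.ne').sub_const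
      (3 / 2 * log y)).sub_const (1 / 2 * log z)
  have d2 : HasDerivAt (fun t => log (x + t ^ 2) - 3 / 2 * log t - 1 / 2 * log z)
      (2 * y / (x + y ^ 2) - 3 / (2 * y)) y := by
    refine ((((hasDerivAt_pow 2 y).const_add x).log hxy.ne').sub
      ((hasDerivAt_log hy.ne').const_mul (3 / 2)) |>.sub_const (1 / 2 * log z)).congr_deriv ?_
    field_simp
    ring
  have d3 : HasDerivAt (fun t => log (x + y ^ 2) - 3 / 2 * log y - 1 / 2 * log t)
      (-1 / (2 * z)) z := by
    refine (((hasDerivAt_log hz.ne').const_mul (1 / 2)).const_sub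
      (log (x + y ^ 2) - 3 / 2 * log y)).congr_deriv ?_
    field_simp
  simp only [grad, pd1, pd2, pd3, guillotLogForm]
  rw [d1.deriv, d2.deriv, d3.deriv]

/-- H₂ = log((x+y²)/(y√(yz))) is a first integral of the Guillot system
on the region y > 0, z > 0, x + y² > 0. -/
theorem stmt11 :
    ∀ p : V3, 0 < p.2.1 → 0 < p.2.2 → 0 < p.1 + p.2.1 ^ 2 →
      dot (vG p) (grad (fun q : V3 =>
        Real.log ((q.1 + q.2.1 ^ 2) / (q.2.1 * Real.sqrt (q.2.1 * q.2.2)))) p) = 0 := by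
  rintro ⟨x, y, z⟩ hy hz hxy
  rw [grad_congr_of_eventuallyEq (eventuallyEq_guillotLogForm hy hz hxy),
    grad_guillotLogForm hy hz hxy]
  simp only [dot, vG]
  field_simp
  ring
end
end

section
/- For the Guillot vector field v = (x² + y⁴, xy, 2y²z - xz) and the multiplier M = 1/(2zy³), the scaled field Mv is divergence-free on the region where y ≠ 0 and z ≠ 0: ∇ · (Mv) = 0. -/
/-! By the product rule, `∇·(Mv) = M ∇·v + ∇M·v`. Here `∇·v = 2(x + y²)`, while
`∇M = M (0, -3/y, -1/z)` gives `∇M·v = M(-3x - (2y² - x)) = -2M(x + y²)`. -/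

noncomputable section

section ProductRule

variable {f g : V3 → ℝ} {F : V3 → V3} {p : V3}

theorem pd1_mul (hf : DifferentiableAt ℝ f p) (hg : DifferentiableAt ℝ g p) :
    pd1 (fun q => f q * g q) p = pd1 f p * g p + f p * pd1 g p :=
  deriv_mul (hf.comp p.1 (by fun_prop)) (hg.comp p.1 (by fun_prop))

theorem pd2_mul (hf : DifferentiableAt ℝ f p) (hg : DifferentiableAt ℝ g p) :
    pd2 (fun q => f q * g q) p = pd2 f p * g p + f p * pd2 g p :=
  deriv_mul (hf.comp p.2.1 (by fun_prop)) (hg.comp p.2.1 (by fun_prop))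

theorem pd3_mul (hf : DifferentiableAt ℝ f p) (hg : DifferentiableAt ℝ g p) :
    pd3 (fun q => f q * g q) p = pd3 f p * g p + f p * pd3 g p :=
  deriv_mul (hf.comp p.2.2 (by fun_prop)) (hg.comp p.2.2 (by fun_prop))

theorem diverg_smul (hf : DifferentiableAt ℝ f p) (hF : DifferentiableAt ℝ F p) :
    diverg (fun q => f q • F q) p = f p * diverg F p + dot (grad f p) (F p) := by
  simp only [diverg, Prod.smul_fst, Prod.smul_snd, smul_eq_mul]
  rw [pd1_mul hf hF.fst, pd2_mul hf hF.snd.fst, pd3_mul hf hF.snd.snd]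
  simp only [dot, grad]
  ring

end ProductRule

theorem differentiableAt_vG (p : V3) : DifferentiableAt ℝ vG p := by
  unfold vG
  fun_prop

theorem diverg_vG (p : V3) : diverg vG p = 2 * p.1 + 2 * p.2.1 ^ 2 := by
  obtain ⟨x, y, z⟩ := p
  have h1 : HasDerivAt (fun t : ℝ => t ^ 2 + y ^ 4) (2 * x) x := by
    simpa using (hasDerivAt_pow 2 x).add_const (y ^ 4)
  have h2 : HasDerivAt (fun t : ℝ => x * t) x y := by
    simpa using (hasDerivAt_id y).const_mul x
  have h3 : HasDerivAt (fun t : ℝ => 2 * y ^ 2 * t - x * t) (2 * y ^ 2 - x) z :=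
    (((hasDerivAt_id z).const_mul _).sub ((hasDerivAt_id z).const_mul x)).congr_deriv (by ring)
  simp only [diverg, pd1, pd2, pd3, vG, h1.deriv, h2.deriv, h3.deriv]
  ring

theorem grad_one_div_two_mul_mul_pow_three {p : V3} (hy : p.2.1 ≠ 0) (hz : p.2.2 ≠ 0) :
    grad (fun q : V3 => 1 / (2 * q.2.2 * q.2.1 ^ 3)) p =
      (0, -3 / (2 * p.2.2 * p.2.1 ^ 4), -1 / (2 * p.2.2 ^ 2 * p.2.1 ^ 3)) := by
  obtain ⟨x, y, z⟩ := p
  dsimp only at hy hz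
  have h2 : HasDerivAt (fun t : ℝ => 1 / (2 * z * t ^ 3)) (-3 / (2 * z * y ^ 4)) y := by
    have hd := (hasDerivAt_pow 3 y).const_mul (2 * z)
    refine ((hasDerivAt_const y 1).div hd (by positivity)).congr_deriv ?_
    field_simp
    ring
  have h3 : HasDerivAt (fun t : ℝ => 1 / (2 * t * y ^ 3)) (-1 / (2 * z ^ 2 * y ^ 3)) z := by
    have hd : HasDerivAt (fun t : ℝ => 2 * t * y ^ 3) (2 * y ^ 3) z := by
      simpa using ((hasDerivAt_id z).const_mul 2).mul_const (y ^ 3)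
    refine ((hasDerivAt_const z 1).div hd (by positivity)).congr_deriv ?_
    field_simp
    ring
  simp only [grad, pd1, pd2, pd3, deriv_const, h2.deriv, h3.deriv]

/-- M = 1/(2zy³) is a Jacobi last multiplier for the Guillot system:
∇·(Mv) = 0 where y ≠ 0 and z ≠ 0. -/
theorem stmt12 :
    ∀ p : V3, p.2.1 ≠ 0 → p.2.2 ≠ 0 →
      diverg (fun q : V3 => (1 / (2 * q.2.2 * q.2.1 ^ 3)) • vG q) p = 0 := by
  intro p hy hz
  have hM : DifferentiableAt ℝ (fun q : V3 => 1 / (2 * q.2.2 * q.2.1 ^ 3)) p := by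
    fun_prop (disch := simp_all)
  rw [diverg_smul hM (differentiableAt_vG p), diverg_vG, grad_one_div_two_mul_mul_pow_three hy hz]
  simp only [dot, vG]
  field_simp
  ring
end
end

section
/- Under the change of variables x = -2(t₁ + t₂ + t₃), y = 4(t₁t₂ + t₂t₃ + t₁t₃), z = -8 t₁t₂t₃, the Darboux-Halphen system ṫ₁ = t₂t₃ - t₁t₂ - t₁t₃ (and cyclic permutations) transforms into ẋ = y/2, ẏ = 3z, ż = 2xz - y²/2. -/
noncomputable section

/-- the Darboux–Halphen system in symmetric polynomial coordinates. -/
theorem stmt15 (t₁ t₂ t₃ : ℝ → ℝ)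
    (h₁ : Differentiable ℝ t₁) (h₂ : Differentiable ℝ t₂) (h₃ : Differentiable ℝ t₃)
    (e₁ : ∀ s, deriv t₁ s = t₂ s * t₃ s - t₁ s * t₂ s - t₁ s * t₃ s)
    (e₂ : ∀ s, deriv t₂ s = t₁ s * t₃ s - t₃ s * t₂ s - t₁ s * t₂ s)
    (e₃ : ∀ s, deriv t₃ s = t₁ s * t₂ s - t₃ s * t₁ s - t₃ s * t₂ s) :
    let x : ℝ → ℝ := fun s => -2 * (t₁ s + t₂ s + t₃ s)
    let y : ℝ → ℝ := fun s => 4 * (t₁ s * t₂ s + t₂ s * t₃ s + t₁ s * t₃ s)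
    let z : ℝ → ℝ := fun s => -8 * (t₁ s * t₂ s * t₃ s)
    ∀ s, deriv x s = y s / 2 ∧ deriv y s = 3 * z s ∧
      deriv z s = 2 * x s * z s - (y s) ^ 2 / 2 := by
  intro x y z s
  have d1 := (h₁ s).hasDerivAt
  have d2 := (h₂ s).hasDerivAt
  have d3 := (h₃ s).hasDerivAt
  have hx : HasDerivAt x (-2 * (deriv t₁ s + deriv t₂ s + deriv t₃ s)) s :=
    ((d1.add d2).add d3).const_mul (-2)
  have hy : HasDerivAt y (4 * ((deriv t₁ s * t₂ s + t₁ s * deriv t₂ s) +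
      (deriv t₂ s * t₃ s + t₂ s * deriv t₃ s) +
      (deriv t₁ s * t₃ s + t₁ s * deriv t₃ s))) s :=
    (((d1.mul d2).add (d2.mul d3)).add (d1.mul d3)).const_mul 4
  have hz : HasDerivAt z (-8 * ((deriv t₁ s * t₂ s + t₁ s * deriv t₂ s) * t₃ s +
      t₁ s * t₂ s * deriv t₃ s)) s :=
    ((d1.mul d2).mul d3).const_mul (-8)
  refine ⟨?_, ?_, ?_⟩
  · rw [hx.deriv, e₁, e₂, e₃]; simp only [y]; ring
  · rw [hy.deriv, e₁, e₂, e₃]; simp only [z]; ring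
  · rw [hz.deriv, e₁, e₂, e₃]; simp only [x, y, z]; ring
end
end
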